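/- The Lobachevsky function satisfies the reflection identity Λ(π - θ) = -Λ(θ) for every real θ. -/

import Mathlib

/-!
Substituting `t ↦ π - t` turns `∫₀^(π-θ) log |2 sin t| dt` into `∫_θ^π log |2 sin t| dt`, so the
identity reduces to `∫₀^π log |2 sin t| dt = 0`, i.e. to the classical `∫₀^π log (sin t) dt = -π log 2`.
-/

open MeasureTheory Real

/-- The Lobachevsky function `Λ(θ) = -∫₀^θ log |2 sin t| dt`. -/
noncomputable def lobachevsky (θ : ℝ) : ℝ :=
  -∫ t in (0:ℝ)..θ, Real.log |2 * Real.sin t|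

open Filter Interval

theorem intervalIntegral.integral_zero_sub_of_symmetric {E : Type*} [NormedAddCommGroup E]
    [NormedSpace ℝ E] {f : ℝ → E} {c : ℝ} (hf : ∀ x, f (c - x) = f x) (θ : ℝ) :
    ∫ x in 0..(c - θ), f x = ∫ x in θ..c, f x := by
  simpa [hf] using (intervalIntegral.integral_comp_sub_left f c (a := θ) (b := c)).symm

theorem intervalIntegrable_log_abs_two_mul_sin (a b : ℝ) :
    IntervalIntegrable (fun t ↦ log |2 * sin t|) volume a b :=
  (analyticOnNhd_const.mul analyticOnNhd_sin).meromorphicOn.intervalIntegrable_log_norm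

theorem integral_log_abs_two_mul_sin_zero_pi : ∫ t in 0..π, log |2 * sin t| = 0 := by
  have sin_ne_zero : sin ⁻¹' {0}ᶜ ∈ codiscreteWithin (Ι 0 π) :=
    codiscreteWithin_mono (Set.subset_univ _)
      (analyticOnNhd_sin.preimage_zero_mem_codiscrete (x := π / 2) (by simp))
  have log_sin_integrable : IntervalIntegrable (fun t ↦ log (sin t)) volume 0 π :=
    intervalIntegrable_log_sin
  calc ∫ t in 0..π, log |2 * sin t|
      = ∫ t in 0..π, (log 2 + log (sin t)) := by
        refine intervalIntegral.integral_congr_codiscreteWithin ?_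
        filter_upwards [sin_ne_zero] with t ht
        rw [log_abs, log_mul two_ne_zero ht]
    _ = 0 := by
        rw [intervalIntegral.integral_add intervalIntegrable_const log_sin_integrable,
          integral_log_sin_zero_pi, intervalIntegral.integral_const, smul_eq_mul]
        ring

/-- The reflection identity Λ(π - θ) = -Λ(θ). -/
theorem lobachevsky_pi_sub (θ : ℝ) : lobachevsky (Real.pi - θ) = -lobachevsky θ := by
  have symm (t : ℝ) : log |2 * sin (π - t)| = log |2 * sin t| := by rw [sin_pi_sub]
  rw [lobachevsky, lobachevsky, intervalIntegral.integral_zero_sub_of_symmetric symm,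
    ← intervalIntegral.integral_interval_sub_left (intervalIntegrable_log_abs_two_mul_sin _ _)
      (intervalIntegrable_log_abs_two_mul_sin _ _),
    integral_log_abs_two_mul_sin_zero_pi, zero_sub, neg_neg]
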